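/- arXiv:2507.00078 — 3 statements merged into one kernel-verified Lean document; each statement's English description precedes it below -/
import Mathlib

section
/- Under the token construction above with S ≥ P ≥ 1, suppose the underlying process X is exponentially mixing in the sense that for every gap g ≥ 1 and every m, dep(σ(X_t : t ≤ m), σ(X_t : t ≥ m + g)) ≤ C·exp(−ρ·g) for constants C, ρ > 0. Then the token sequence is exponentially mixing: for all m ≥ 1 and k ≥ 1, dep(σ(T₁, …, T_m), σ(T_{m+k}, T_{m+k+1}, …)) ≤ C'·exp(−ρ'·(k−1)), where C' = C·exp(−ρ·(S − P + 1)) and ρ' = ρ·S. -/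
open MeasureTheory

lemma dep_le_dep_aux {Ω : Type*} {𝓐 : MeasurableSpace Ω} (μ : MeasureTheory.Measure Ω)
    [MeasureTheory.IsProbabilityMeasure μ]
    {𝓕 𝓕' 𝓖 𝓖' : MeasurableSpace Ω} (h1 : 𝓕 ≤ 𝓕') (h2 : 𝓖 ≤ 𝓖') :
    sSup {x : ℝ | ∃ A B : Set Ω, MeasurableSet[𝓕] A ∧ MeasurableSet[𝓖] B ∧
      x = |(μ (A ∩ B)).toReal - (μ A).toReal * (μ B).toReal|} ≤
    sSup {x : ℝ | ∃ A B : Set Ω, MeasurableSet[𝓕'] A ∧ MeasurableSet[𝓖'] B ∧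
      x = |(μ (A ∩ B)).toReal - (μ A).toReal * (μ B).toReal|} := by
  apply csSup_le_csSup
  · refine ⟨1, ?_⟩
    rintro x ⟨A, B, hA, hB, rfl⟩
    have htop : (1 : ENNReal) ≠ ⊤ := ENNReal.one_ne_top
    have le1 : ∀ s : Set Ω, (μ s).toReal ≤ 1 := by
      intro s
      have := MeasureTheory.prob_le_one (μ := μ) (s := s)
      simpa using ENNReal.toReal_mono htop this
    have h0 : ∀ s : Set Ω, 0 ≤ (μ s).toReal := fun s => ENNReal.toReal_nonneg
    rw [abs_le]
    have hab : (μ A).toReal * (μ B).toReal ≤ 1 := mul_le_one₀ (le1 A) (h0 B) (le1 B)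
    have hab0 : 0 ≤ (μ A).toReal * (μ B).toReal := mul_nonneg (h0 A) (h0 B)
    constructor
    · linarith [h0 (A ∩ B)]
    · linarith [le1 (A ∩ B)]
  · exact ⟨0, ∅, ∅, @MeasurableSet.empty _ 𝓕, @MeasurableSet.empty _ 𝓖, by simp⟩
  · rintro x ⟨A, B, hA, hB, rfl⟩
    exact ⟨A, B, h1 A hA, h2 B hB, rfl⟩


/-- The dependence coefficient between two sub-σ-algebras `𝓕, 𝓖`:
`dep(𝓕, 𝓖) = sup {|μ(A ∩ B) − μ(A)μ(B)| : A ∈ 𝓕, B ∈ 𝓖}`. -/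
noncomputable def dep {Ω : Type*} {𝓐 : MeasurableSpace Ω} (μ : Measure Ω)
    (𝓕 𝓖 : MeasurableSpace Ω) : ℝ :=
  sSup {x : ℝ | ∃ A B : Set Ω, MeasurableSet[𝓕] A ∧ MeasurableSet[𝓖] B ∧
      x = |(μ (A ∩ B)).toReal - (μ A).toReal * (μ B).toReal|}

/-- **Exponential mixing is preserved by tokenization.**
Suppose the process `X` is exponentially mixing: for every gap `g ≥ 1` and every
`m`, `dep(σ(X_t : t ≤ m), σ(X_t : t ≥ m + g)) ≤ C·exp(−ρ·g)` with `C, ρ > 0`.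
With non-overlapping patches (`S ≥ P ≥ 1`) and tokens
`T m ω = Q (fun j => X ((m-1)·S + 1 + j) ω)` for a measurable `Q`, the token
sequence is exponentially mixing: for all `m, k ≥ 1`,
`dep(σ(T₁,…,T_m), σ(T_{m+k},…)) ≤ C'·exp(−ρ'·(k−1))` where
`C' = C·exp(−ρ·(S − P + 1))` and `ρ' = ρ·S`. -/
theorem token_exponential_mixing {Ω 𝒯 : Type*} {𝓐 : MeasurableSpace Ω}
    [MeasurableSpace 𝒯]
    (μ : Measure Ω) [IsProbabilityMeasure μ]
    (X : ℕ → Ω → ℝ) (hX : ∀ t, Measurable (X t))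
    (S P : ℕ) (hP : 1 ≤ P) (hSP : P ≤ S)
    (Q : (Fin P → ℝ) → 𝒯) (hQ : Measurable Q) (T : ℕ → Ω → 𝒯)
    (hT : ∀ m, 1 ≤ m → T m = fun ω => Q (fun j => X ((m - 1) * S + 1 + (j : ℕ)) ω))
    (C ρ : ℝ) (hC : 0 < C) (hρ : 0 < ρ)
    (hmix : ∀ g m : ℕ, 1 ≤ g →
      dep μ (⨆ t ∈ Set.Iic m, MeasurableSpace.comap (X t) inferInstance)
          (⨆ t ∈ Set.Ici (m + g), MeasurableSpace.comap (X t) inferInstance) ≤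
        C * Real.exp (-ρ * g)) :
    ∀ m k : ℕ, 1 ≤ m → 1 ≤ k →
      dep μ (⨆ j ∈ Set.Icc 1 m, MeasurableSpace.comap (T j) inferInstance)
          (⨆ j ∈ Set.Ici (m + k), MeasurableSpace.comap (T j) inferInstance) ≤
        (C * Real.exp (-ρ * ((S : ℝ) - (P : ℝ) + 1))) *
          Real.exp (-(ρ * (S : ℝ)) * ((k : ℝ) - 1)) := by
  intro m k hm hk
  have hkS : P ≤ k * S := le_trans hSP (Nat.le_mul_of_pos_left S (by omega))
  set M : ℕ := (m - 1) * S + P with hM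
  set g : ℕ := k * S + 1 - P with hg
  have hg1 : 1 ≤ g := by omega
  have hidx : M + g = (m + k - 1) * S + 1 := by
    have e : (m + k - 1) * S = (m - 1) * S + k * S := by
      rw [show m + k - 1 = (m - 1) + k from by omega, Nat.add_mul]
    rw [e, hM, hg]
    omega
  -- past inclusion
  have hpast : (⨆ j ∈ Set.Icc 1 m, MeasurableSpace.comap (T j) inferInstance) ≤
      ⨆ t ∈ Set.Iic M, MeasurableSpace.comap (X t) inferInstance := by
    refine iSup₂_le fun n hn => ?_
    rw [hT n hn.1]
    have step1 : MeasurableSpace.comap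
        (fun ω => Q (fun j : Fin P => X ((n - 1) * S + 1 + (j : ℕ)) ω)) inferInstance ≤
        MeasurableSpace.pi.comap (fun ω (j : Fin P) => X ((n - 1) * S + 1 + (j : ℕ)) ω) := by
      rw [show (fun ω => Q (fun j : Fin P => X ((n - 1) * S + 1 + (j : ℕ)) ω))
          = Q ∘ (fun ω (j : Fin P) => X ((n - 1) * S + 1 + (j : ℕ)) ω) from rfl,
        ← MeasurableSpace.comap_comp]
      exact MeasurableSpace.comap_mono (measurable_iff_comap_le.mp hQ)
    refine le_trans step1 ?_
    rw [show (MeasurableSpace.pi : MeasurableSpace (Fin P → ℝ))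
        = ⨆ i : Fin P, MeasurableSpace.comap (fun v : Fin P → ℝ => v i) inferInstance from rfl,
      MeasurableSpace.comap_iSup]
    refine iSup_le fun i => ?_
    rw [MeasurableSpace.comap_comp]
    have ht : (n - 1) * S + 1 + (i : ℕ) ∈ Set.Iic M := by
      have h1 : (n - 1) * S ≤ (m - 1) * S :=
        Nat.mul_le_mul_right _ (by have := hn.2; omega)
      have h2 : (1 : ℕ) + (i : ℕ) ≤ P := by have := i.isLt; omega
      simp only [Set.mem_Iic, hM, add_assoc]
      exact Nat.add_le_add h1 h2
    exact le_iSup₂ (f := fun t (_ : t ∈ Set.Iic M) =>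
      MeasurableSpace.comap (X t) inferInstance) _ ht
  -- future inclusion
  have hfut : (⨆ j ∈ Set.Ici (m + k), MeasurableSpace.comap (T j) inferInstance) ≤
      ⨆ t ∈ Set.Ici (M + g), MeasurableSpace.comap (X t) inferInstance := by
    refine iSup₂_le fun n hn => ?_
    have hn1 : 1 ≤ n := le_trans (by omega) hn
    rw [hT n hn1]
    have step1 : MeasurableSpace.comap
        (fun ω => Q (fun j : Fin P => X ((n - 1) * S + 1 + (j : ℕ)) ω)) inferInstance ≤
        MeasurableSpace.pi.comap (fun ω (j : Fin P) => X ((n - 1) * S + 1 + (j : ℕ)) ω) := by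
      rw [show (fun ω => Q (fun j : Fin P => X ((n - 1) * S + 1 + (j : ℕ)) ω))
          = Q ∘ (fun ω (j : Fin P) => X ((n - 1) * S + 1 + (j : ℕ)) ω) from rfl,
        ← MeasurableSpace.comap_comp]
      exact MeasurableSpace.comap_mono (measurable_iff_comap_le.mp hQ)
    refine le_trans step1 ?_
    rw [show (MeasurableSpace.pi : MeasurableSpace (Fin P → ℝ))
        = ⨆ i : Fin P, MeasurableSpace.comap (fun v : Fin P → ℝ => v i) inferInstance from rfl,
      MeasurableSpace.comap_iSup]
    refine iSup_le fun i => ?_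
    rw [MeasurableSpace.comap_comp]
    have ht : (n - 1) * S + 1 + (i : ℕ) ∈ Set.Ici (M + g) := by
      have h1 : (m + k - 1) * S ≤ (n - 1) * S :=
        Nat.mul_le_mul_right _ (by have := Set.mem_Ici.mp hn; omega)
      simp only [Set.mem_Ici, hidx]
      calc (m + k - 1) * S + 1 ≤ (n - 1) * S + 1 := Nat.add_le_add h1 le_rfl
        _ ≤ (n - 1) * S + 1 + (i : ℕ) := Nat.le_add_right _ _
    exact le_iSup₂ (f := fun t (_ : t ∈ Set.Ici (M + g)) =>
      MeasurableSpace.comap (X t) inferInstance) _ ht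
  have key : dep μ (⨆ j ∈ Set.Icc 1 m, MeasurableSpace.comap (T j) inferInstance)
      (⨆ j ∈ Set.Ici (m + k), MeasurableSpace.comap (T j) inferInstance) ≤
      C * Real.exp (-ρ * g) :=
    le_trans (dep_le_dep_aux μ hpast hfut) (hmix g M hg1)
  refine le_trans key (le_of_eq ?_)
  have hgcast : (g : ℝ) = (k : ℝ) * (S : ℝ) + 1 - (P : ℝ) := by
    rw [hg, Nat.cast_sub (by omega)]
    push_cast
    ring
  rw [mul_assoc, ← Real.exp_add]
  congr 1
  rw [hgcast]
  ring
end

section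
/- Let n ≥ 1 and let a, b : Fin n → ℝ be two logit vectors. Let softmax(a)_i = exp(a_i) / ∑_{j} exp(a_j). Then the total variation distance between the two softmax distributions is bounded by half the ℓ¹ distance of the logits: (1/2) ∑_{i} |softmax(a)_i − softmax(b)_i| ≤ (1/2) ∑_{i} |a_i − b_i|. -/
open scoped BigOperators

/-- The softmax distribution of a logit vector `a ∈ ℝⁿ`:
`softmax(a)_i = exp(a_i) / ∑_j exp(a_j)`. -/
noncomputable def softmax {n : ℕ} (a : Fin n → ℝ) : Fin n → ℝ :=
  fun i => Real.exp (a i) / ∑ j, Real.exp (a j)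

lemma my_sinh_le (x : ℝ) (hx : 0 ≤ x) : Real.sinh x ≤ x * Real.cosh x := by
  have h : ∀ y : ℝ, HasDerivAt (fun t => t * Real.cosh t - Real.sinh t) (y * Real.sinh y) y := by
    intro y
    have := ((hasDerivAt_id y).mul (Real.hasDerivAt_cosh y)).sub (Real.hasDerivAt_sinh y)
    refine this.congr_deriv ?_
    simp [mul_comm]
  have mono : MonotoneOn (fun t => t * Real.cosh t - Real.sinh t) (Set.Ici (0:ℝ)) := by
    apply monotoneOn_of_deriv_nonneg (convex_Ici 0)
    · exact (Continuous.continuousOn (by continuity))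
    · intro y hy
      exact (h y).differentiableAt.differentiableWithinAt
    · intro y hy
      rw [(h y).deriv]
      rw [interior_Ici, Set.mem_Ioi] at hy
      positivity
  have := mono (Set.self_mem_Ici) hx hx
  simpa using this

lemma my_abs_exp_sub (u v : ℝ) :
    |Real.exp u - Real.exp v| ≤ (Real.exp u + Real.exp v) / 2 * |u - v| := by
  set m := (u + v) / 2
  set s := (u - v) / 2
  have e1 : Real.exp u = Real.exp m * Real.exp s := by rw [← Real.exp_add]; congr 1; simp [m, s]; ring
  have e2 : Real.exp v = Real.exp m * Real.exp (-s) := by rw [← Real.exp_add]; congr 1; simp [m, s]; ring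
  have h1 : Real.exp u - Real.exp v = 2 * Real.exp m * Real.sinh s := by
    rw [e1, e2, Real.sinh_eq]; ring
  have h2 : Real.exp u + Real.exp v = 2 * Real.exp m * Real.cosh s := by
    rw [e1, e2, Real.cosh_eq]; ring
  have huv : |u - v| = 2 * |s| := by
    rw [show u - v = 2 * s by simp [s]; ring, abs_mul]; norm_num
  rw [h1, h2, huv, abs_mul, abs_mul]
  have hs : |Real.sinh s| = Real.sinh |s| := Real.abs_sinh s
  have hkey : Real.sinh |s| ≤ |s| * Real.cosh s := by
    have := my_sinh_le |s| (abs_nonneg s)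
    rwa [Real.cosh_abs] at this
  rw [hs]
  have hm : (0:ℝ) < Real.exp m := Real.exp_pos m
  calc |2| * |Real.exp m| * Real.sinh |s| = 2 * Real.exp m * Real.sinh |s| := by
        rw [abs_of_nonneg (by norm_num : (0:ℝ) ≤ 2), abs_of_pos hm]
    _ ≤ 2 * Real.exp m * (|s| * Real.cosh s) := by nlinarith [Real.exp_pos m]
    _ = 2 * Real.exp m * Real.cosh s / 2 * (2 * |s|) := by ring

/-- **Total variation distance of softmax distributions is bounded by half the ℓ¹
distance of the logits.** -/
theorem tv_softmax_le_half_l1_logits (n : ℕ) (hn : 1 ≤ n) (a b : Fin n → ℝ) :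
    (1 / 2 : ℝ) * ∑ i, |softmax a i - softmax b i| ≤
      (1 / 2 : ℝ) * ∑ i, |a i - b i| := by
  haveI : Nonempty (Fin n) := Fin.pos_iff_nonempty.mp hn
  set S := ∑ j, Real.exp (a j) with hSdef
  set T := ∑ j, Real.exp (b j) with hTdef
  have hS : 0 < S := Finset.sum_pos (fun j _ => Real.exp_pos _) Finset.univ_nonempty
  have hT : 0 < T := Finset.sum_pos (fun j _ => Real.exp_pos _) Finset.univ_nonempty
  have hST : 0 < S * T := mul_pos hS hT
  set w : Fin n → Fin n → ℝ := fun i j => (Real.exp (a i + b j) + Real.exp (b i + a j)) / 2 with hw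
  set g : Fin n → Fin n → ℝ := fun i j => if i = j then 0 else w i j * |a i - b i| with hg
  -- Step A: exact expression
  have hA : ∀ i, softmax a i - softmax b i =
      (∑ j, (Real.exp (a i + b j) - Real.exp (b i + a j))) / (S * T) := by
    intro i
    rw [show softmax a i = Real.exp (a i) / S from rfl, show softmax b i = Real.exp (b i) / T from rfl]
    rw [div_sub_div _ _ hS.ne' hT.ne']
    congr 1
    simp only [Real.exp_add, hSdef, hTdef, Finset.mul_sum, Finset.sum_sub_distrib]
    rw [Finset.sum_mul]
    simp [mul_comm]
  -- Step B: termwise bound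
  have hB : ∀ i, |softmax a i - softmax b i| ≤
      (∑ j, w i j * |(a i - b i) - (a j - b j)|) / (S * T) := by
    intro i
    rw [hA i, abs_div, abs_of_pos hST]
    gcongr
    calc |∑ j, (Real.exp (a i + b j) - Real.exp (b i + a j))|
        ≤ ∑ j, |Real.exp (a i + b j) - Real.exp (b i + a j)| := Finset.abs_sum_le_sum_abs _ _
      _ ≤ ∑ j, w i j * |(a i - b i) - (a j - b j)| := by
          apply Finset.sum_le_sum
          intro j _
          have h := my_abs_exp_sub (a i + b j) (b i + a j)
          have heq : |(a i + b j) - (b i + a j)| = |(a i - b i) - (a j - b j)| := by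
            congr 1; ring
          rw [heq] at h
          exact h
  -- pairwise bound
  have hpair : ∀ i j, w i j * |(a i - b i) - (a j - b j)| ≤ g i j + g j i := by
    intro i j
    by_cases h : i = j
    · subst h; simp [hg]
    · have hwnn : 0 ≤ w i j := by positivity
      have hsym : w j i = w i j := by simp [hw, add_comm]
      have habs : |(a i - b i) - (a j - b j)| ≤ |a i - b i| + |a j - b j| := abs_sub _ _
      have hgij : g i j + g j i = w i j * |a i - b i| + w i j * |a j - b j| := by
        simp [hg, h, Ne.symm h, hsym]
      rw [hgij]
      nlinarith
  -- row sums of g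
  have hwsum : ∀ i, ∑ j, w i j = (Real.exp (a i) * T + Real.exp (b i) * S) / 2 := by
    intro i
    simp only [hw, Real.exp_add]
    rw [← Finset.sum_div, Finset.sum_add_distrib, ← Finset.mul_sum, ← Finset.mul_sum, hSdef, hTdef]
  have hgsum : ∀ i, ∑ j, g i j = (∑ j, w i j) * |a i - b i| - w i i * |a i - b i| := by
    intro i
    have hterm : ∀ j, g i j = w i j * |a i - b i| - (if i = j then w i j * |a i - b i| else 0) := by
      intro j; by_cases h : i = j <;> simp [hg, h]
    rw [Finset.sum_congr rfl (fun j _ => hterm j)]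
    rw [Finset.sum_sub_distrib, Finset.sum_ite_eq, Finset.sum_mul]
    simp
  have hrow : ∀ i, 2 * ∑ j, g i j ≤ |a i - b i| * (S * T) := by
    intro i
    rw [hgsum i, hwsum i]
    have h1 : Real.exp (a i) ≤ S := Finset.single_le_sum (f := fun j => Real.exp (a j)) (fun j _ => (Real.exp_pos (a j)).le) (Finset.mem_univ i)
    have h2 : Real.exp (b i) ≤ T := Finset.single_le_sum (f := fun j => Real.exp (b j)) (fun j _ => (Real.exp_pos (b j)).le) (Finset.mem_univ i)
    have hwii : w i i = Real.exp (a i) * Real.exp (b i) := by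
      simp [hw, Real.exp_add]
      ring
    have hd : 0 ≤ |a i - b i| := abs_nonneg _
    rw [hwii]
    nlinarith [mul_nonneg (mul_nonneg (sub_nonneg.2 h1) (sub_nonneg.2 h2)) hd,
      mul_nonneg (mul_nonneg (Real.exp_pos (a i)).le (Real.exp_pos (b i)).le) hd]
  -- assembly
  have hswap : ∑ i, ∑ j, g j i = ∑ i, ∑ j, g i j := Finset.sum_comm
  have hfinal : ∑ i, |softmax a i - softmax b i| ≤ ∑ i, |a i - b i| := by
    calc ∑ i, |softmax a i - softmax b i|
        ≤ ∑ i, (∑ j, w i j * |(a i - b i) - (a j - b j)|) / (S * T) :=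
          Finset.sum_le_sum fun i _ => hB i
      _ = (∑ i, ∑ j, w i j * |(a i - b i) - (a j - b j)|) / (S * T) := by
          rw [Finset.sum_div]
      _ ≤ (∑ i, ∑ j, (g i j + g j i)) / (S * T) := by
          exact (div_le_div_iff_of_pos_right hST).mpr
            (Finset.sum_le_sum fun i _ => Finset.sum_le_sum fun j _ => hpair i j)
      _ = (∑ i, 2 * ∑ j, g i j) / (S * T) := by
          congr 1
          simp only [Finset.sum_add_distrib]
          rw [hswap]
          rw [← Finset.sum_add_distrib]
          apply Finset.sum_congr rfl
          intro i _
          ring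
      _ ≤ (∑ i, |a i - b i| * (S * T)) / (S * T) := by
          exact (div_le_div_iff_of_pos_right hST).mpr (Finset.sum_le_sum fun i _ => hrow i)
      _ = ∑ i, |a i - b i| := by
          rw [← Finset.sum_mul, mul_div_assoc, div_self hST.ne', mul_one]
  linarith
end

section
/- Let E be a Euclidean space, n ≥ 1, and let f : E → ℝⁿ (with the Euclidean norm on ℝⁿ) be Lipschitz with constant L ≥ 0. Then for all z₁, z₂ ∈ E, the total variation distance between the softmax distributions of the logits satisfies (1/2) ∑_{i} |softmax(f(z₁))_i − softmax(f(z₂))_i| ≤ (√n / 2) · L · ‖z₁ − z₂‖. -/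
open scoped BigOperators


lemma sinh_le_mul_cosh (t : ℝ) (ht : 0 ≤ t) : Real.sinh t ≤ t * Real.cosh t := by
  have key : MonotoneOn (fun t => t * Real.cosh t - Real.sinh t) (Set.Ici 0) := by
    apply monotoneOn_of_deriv_nonneg (convex_Ici 0)
    · fun_prop
    · fun_prop
    · intro x hx
      rw [interior_Ici] at hx
      have : deriv (fun t => t * Real.cosh t - Real.sinh t) x = x * Real.sinh x := by
        rw [deriv_fun_sub (by fun_prop) (by fun_prop), deriv_fun_mul (by fun_prop) (by fun_prop)]
        simp [Real.deriv_cosh, Real.deriv_sinh]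
      rw [this]
      exact mul_nonneg hx.le (Real.sinh_nonneg_iff.2 hx.le)
  have := key (Set.self_mem_Ici) (Set.mem_Ici.2 ht) ht
  simpa using this

lemma abs_exp_sub (x y : ℝ) :
    |Real.exp x - Real.exp y| ≤ |x - y| / 2 * (Real.exp x + Real.exp y) := by
  wlog h : y ≤ x generalizing x y
  · have h2 := this y x (le_of_not_ge h)
    rw [abs_sub_comm y x, abs_sub_comm (Real.exp y)] at h2
    refine h2.trans_eq ?_
    ring
  have ht : 0 ≤ (x - y) / 2 := by linarith
  have hs : Real.sinh ((x - y)/2) ≤ (x - y)/2 * Real.cosh ((x - y)/2) :=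
    sinh_le_mul_cosh _ ht
  have e1 : Real.exp x = Real.exp ((x+y)/2) * Real.exp ((x-y)/2) := by
    rw [← Real.exp_add]; ring_nf
  have e2 : Real.exp y = Real.exp ((x+y)/2) * Real.exp (-((x-y)/2)) := by
    rw [← Real.exp_add]; ring_nf
  have hx : Real.exp x - Real.exp y = 2 * Real.exp ((x+y)/2) * Real.sinh ((x-y)/2) := by
    rw [Real.sinh_eq, e1, e2]; ring
  have hx2 : Real.exp x + Real.exp y = 2 * Real.exp ((x+y)/2) * Real.cosh ((x-y)/2) := by
    rw [Real.cosh_eq, e1, e2]; ring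
  have he : (0:ℝ) < Real.exp ((x+y)/2) := Real.exp_pos _
  have habs : |x - y| = x - y := abs_of_nonneg (by linarith)
  have h0 : 0 ≤ Real.exp x - Real.exp y := by
    have := Real.exp_le_exp.2 h; linarith
  rw [abs_of_nonneg h0, habs, hx, hx2]
  nlinarith [hs, he]

/-- **Lipschitz logits give a total variation bound on softmax outputs.**
If the logit map `f : E → ℝⁿ` (Euclidean norm on `ℝⁿ`) is `L`-Lipschitz, then the
total variation distance between the softmax distributions of `f z₁` and `f z₂`
is at most `(√n / 2)·L·‖z₁ − z₂‖`. -/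
theorem tv_softmax_le_lipschitz_logits
    {E : Type*} [NormedAddCommGroup E] [InnerProductSpace ℝ E]
    (n : ℕ) (hn : 1 ≤ n) (f : E → EuclideanSpace ℝ (Fin n))
    (L : ℝ) (hL : 0 ≤ L) (hf : ∀ z₁ z₂ : E, ‖f z₁ - f z₂‖ ≤ L * ‖z₁ - z₂‖)
    (z₁ z₂ : E) :
    (1 / 2 : ℝ) * ∑ i, |softmax (fun j => f z₁ j) i - softmax (fun j => f z₂ j) i| ≤
      (Real.sqrt n / 2) * L * ‖z₁ - z₂‖ := by
  set a : Fin n → ℝ := fun j => f z₁ j with ha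
  set b : Fin n → ℝ := fun j => f z₂ j with hb
  set D : ℝ := L * ‖z₁ - z₂‖ with hDdef
  have hD : 0 ≤ D := mul_nonneg hL (norm_nonneg _)
  -- case n = 1
  rcases eq_or_lt_of_le hn with h1 | h2
  · have hz : ∀ (c : Fin n → ℝ) (i : Fin n), softmax c i = 1 := by
      intro c i
      have : (Finset.univ : Finset (Fin n)) = {i} := by
        apply Finset.eq_singleton_iff_unique_mem.2
        exact ⟨Finset.mem_univ _, fun j _ => by omega⟩
      simp [softmax, this, div_self (Real.exp_pos _).ne']
    simp only [hz, sub_self, abs_zero, Finset.sum_const_zero, mul_zero]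
    have : 0 ≤ Real.sqrt n := Real.sqrt_nonneg _
    positivity
  -- n ≥ 2 from here
  have hne : Nonempty (Fin n) := ⟨⟨0, hn⟩⟩
  set A : ℝ := ∑ j, Real.exp (a j) with hAdef
  set B : ℝ := ∑ j, Real.exp (b j) with hBdef
  have hA : 0 < A := Finset.sum_pos (fun i _ => Real.exp_pos _) Finset.univ_nonempty
  have hB : 0 < B := Finset.sum_pos (fun i _ => Real.exp_pos _) Finset.univ_nonempty
  -- norm bound
  have hsumsq : ∑ i, (a i - b i)^2 ≤ D^2 := by
    have hnorm : ‖f z₁ - f z₂‖ = Real.sqrt (∑ i, (a i - b i)^2) := by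
      rw [EuclideanSpace.norm_eq]
      congr 1
      refine Finset.sum_congr rfl fun i _ => ?_
      simp [ha, hb, Real.norm_eq_abs, sq_abs]
    have h3 : Real.sqrt (∑ i, (a i - b i)^2) ≤ D := hnorm ▸ hf z₁ z₂
    have h4 : 0 ≤ ∑ i, (a i - b i)^2 :=
      Finset.sum_nonneg fun i _ => sq_nonneg _
    calc ∑ i, (a i - b i)^2 = (Real.sqrt (∑ i, (a i - b i)^2))^2 := (Real.sq_sqrt h4).symm
      _ ≤ D^2 := by exact pow_le_pow_left₀ (Real.sqrt_nonneg _) h3 2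
  -- per pair bound
  have key : ∀ i j : Fin n, |Real.exp (a i + b j) - Real.exp (a j + b i)| ≤
      (Real.sqrt 2 * D) / 2 * (Real.exp (a i + b j) + Real.exp (a j + b i)) := by
    intro i j
    rcases eq_or_ne i j with rfl | hij
    · simp only [sub_self, abs_zero]
      positivity
    · have hd : |(a i + b j) - (a j + b i)| ≤ Real.sqrt 2 * D := by
        have hij2 : (a i - b i)^2 + (a j - b j)^2 ≤ ∑ k, (a k - b k)^2 := by
          have := Finset.sum_le_sum_of_subset_of_nonneg
            (Finset.subset_univ {i, j}) (fun k _ _ => sq_nonneg (a k - b k))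
          rwa [Finset.sum_pair hij] at this
        have hsq : ((a i + b j) - (a j + b i))^2 ≤ 2 * D^2 := by
          nlinarith [sq_nonneg ((a i - b i) + (a j - b j)), hsumsq]
        calc |(a i + b j) - (a j + b i)| = Real.sqrt (((a i + b j) - (a j + b i))^2) :=
              (Real.sqrt_sq_eq_abs _).symm
          _ ≤ Real.sqrt (2 * D^2) := Real.sqrt_le_sqrt hsq
          _ = Real.sqrt 2 * D := by
              rw [Real.sqrt_mul (by norm_num), Real.sqrt_sq hD]
      calc |Real.exp (a i + b j) - Real.exp (a j + b i)|
          ≤ |(a i + b j) - (a j + b i)| / 2 * (Real.exp (a i + b j) + Real.exp (a j + b i)) :=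
            abs_exp_sub _ _
        _ ≤ (Real.sqrt 2 * D) / 2 * (Real.exp (a i + b j) + Real.exp (a j + b i)) := by
            gcongr
  -- difference formula
  have hdiff : ∀ i, softmax a i - softmax b i =
      (∑ j, (Real.exp (a i + b j) - Real.exp (a j + b i))) / (A * B) := by
    intro i
    have hnum : Real.exp (a i) * B - Real.exp (b i) * A =
        ∑ j, (Real.exp (a i + b j) - Real.exp (a j + b i)) := by
      rw [Finset.sum_sub_distrib]
      simp only [Real.exp_add]
      rw [← Finset.mul_sum, ← Finset.sum_mul]
      ring
    show Real.exp (a i) / A - Real.exp (b i) / B = _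
    rw [div_sub_div _ _ hA.ne' hB.ne']
    congr 1
    rw [← hnum]
    ring
  -- total of the weights
  have hw : ∑ i, ∑ j, (Real.exp (a i + b j) + Real.exp (a j + b i)) = 2 * (A * B) := by
    simp only [Real.exp_add, Finset.sum_add_distrib, ← Finset.mul_sum, ← Finset.sum_mul]
    rw [← hAdef, ← hBdef]
    ring
  -- main chain
  have main : ∑ i, |softmax a i - softmax b i| ≤ Real.sqrt 2 * D := by
    calc ∑ i, |softmax a i - softmax b i|
        = ∑ i, |∑ j, (Real.exp (a i + b j) - Real.exp (a j + b i))| / (A * B) := by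
          refine Finset.sum_congr rfl fun i _ => ?_
          rw [hdiff i, abs_div, abs_of_pos (mul_pos hA hB)]
      _ ≤ ∑ i, (∑ j, ((Real.sqrt 2 * D) / 2 * (Real.exp (a i + b j) + Real.exp (a j + b i)))) / (A * B) := by
          refine Finset.sum_le_sum fun i _ => ?_
          apply div_le_div_of_nonneg_right ?_ (mul_pos hA hB).le
          exact (Finset.abs_sum_le_sum_abs _ _).trans (Finset.sum_le_sum fun j _ => key i j)
      _ = (Real.sqrt 2 * D) / 2 * (2 * (A * B)) / (A * B) := by
          rw [← Finset.sum_div, ← hw]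
          congr 1
          simp [Finset.mul_sum]
      _ = Real.sqrt 2 * D := by
          field_simp
  have hsqrt : Real.sqrt 2 ≤ Real.sqrt n := by
    apply Real.sqrt_le_sqrt
    exact_mod_cast h2
  calc (1 / 2 : ℝ) * ∑ i, |softmax a i - softmax b i|
      ≤ (1 / 2 : ℝ) * (Real.sqrt 2 * D) := by
        apply mul_le_mul_of_nonneg_left main (by norm_num)
    _ ≤ (Real.sqrt n / 2) * L * ‖z₁ - z₂‖ := by
        rw [hDdef]
        nlinarith [Real.sqrt_nonneg (n:ℝ), hD, mul_nonneg hL (norm_nonneg (z₁ - z₂))]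
end
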